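/- Let X ~ P* = N(0, Γ) and define ν_x = Var(log(W(Y|x)/Q*(Y))) where Y ~ N(x, N) and Q* = N(0, Γ+N). Then the channel dispersion V(Γ) = E_{P*}[ν_X] equals (Γ² + 2ΓN)/(2(N + Γ)²). -/

import Mathlib

open MeasureTheory ProbabilityTheory Real
open scoped NNReal
open Filter
open scoped ENNReal Topology

lemma pow_le_factorial_mul_exp (k : ℕ) {x : ℝ} (hx : 0 ≤ x) :
    x ^ k ≤ k.factorial * Real.exp x := by
  have h1 : x ^ k / k.factorial ≤ ∑ i ∈ Finset.range (k+1), x ^ i / i.factorial := by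
    refine Finset.single_le_sum (f := fun i => x ^ i / i.factorial) ?_ (Finset.self_mem_range_succ k)
    intro i _
    positivity
  have h2 := Real.sum_le_exp_of_nonneg hx (k+1)
  have hk : (0:ℝ) < k.factorial := by positivity
  calc x ^ k = k.factorial * (x ^ k / k.factorial) := by field_simp
  _ ≤ k.factorial * Real.exp x := by nlinarith [h1.trans h2]

lemma integrable_pow_mul_gauss {b : ℝ} (hb : 0 < b) (k : ℕ) :
    Integrable (fun x : ℝ => x ^ k * Real.exp (-b * x ^ 2)) := by
  have hmeas : AEStronglyMeasurable (fun x : ℝ => x ^ k * Real.exp (-b * x ^ 2)) volume :=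
    (Continuous.mul (continuous_pow k) (by continuity)).aestronglyMeasurable
  have hint : Integrable (fun x : ℝ => (k.factorial * Real.exp (1/(2*b))) * Real.exp (-(b/2) * x ^ 2)) :=
    (integrable_exp_neg_mul_sq (by linarith)).const_mul _
  refine hint.mono' hmeas (Filter.Eventually.of_forall fun x => ?_)
  have hb' : b * (1/b) = 1 := mul_one_div_cancel hb.ne'
  have habs : |x| ≤ (b * x^2 + 1/b)/2 := by
    rcases abs_cases x with ⟨h, _⟩ | ⟨h, _⟩ <;> rw [h] <;>
      nlinarith [sq_nonneg (b * x - 1), sq_nonneg (b * x + 1), hb, hb']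
  have hk : (0:ℝ) ≤ k.factorial := by positivity
  have h1 : |x| ^ k ≤ k.factorial * Real.exp ((b * x^2 + 1/b)/2) := by
    calc |x| ^ k ≤ k.factorial * Real.exp |x| := pow_le_factorial_mul_exp k (abs_nonneg x)
    _ ≤ _ := mul_le_mul_of_nonneg_left (Real.exp_le_exp.mpr habs) hk
  rw [norm_mul, norm_pow, Real.norm_eq_abs, Real.norm_eq_abs, Real.abs_exp]
  have hexp : Real.exp ((b * x^2 + 1/b)/2) * Real.exp (-b * x^2) = Real.exp (1/(2*b)) * Real.exp (-(b/2) * x^2) := by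
    rw [← Real.exp_add, ← Real.exp_add]
    congr 1
    field_simp
    ring
  calc |x| ^ k * Real.exp (-b * x ^ 2)
      ≤ (k.factorial * Real.exp ((b * x^2 + 1/b)/2)) * Real.exp (-b * x^2) := by
        have := Real.exp_pos (-b * x^2); nlinarith
  _ = (k.factorial * Real.exp (1/(2*b))) * Real.exp (-(b/2) * x ^ 2) := by
        rw [mul_assoc, hexp, mul_assoc]

lemma tendsto_pow_mul_gauss_atTop {b : ℝ} (hb : 0 < b) (k : ℕ) :
    Tendsto (fun x : ℝ => x ^ k * Real.exp (-b * x ^ 2)) atTop (nhds 0) := by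
  have hlin : Tendsto (fun x : ℝ => -(1/2) * x) atTop atBot := by
    apply Tendsto.const_mul_atTop_of_neg (by norm_num : (-(1/2):ℝ) < 0) tendsto_id
  have h0 : Tendsto (fun x : ℝ => Real.exp (-(1/2) * x)) atTop (nhds 0) :=
    Real.tendsto_exp_atBot.comp hlin
  have h := (rpow_mul_exp_neg_mul_sq_isLittleO_exp_neg hb (k : ℝ)).trans_tendsto h0
  refine h.congr' ?_
  filter_upwards [eventually_gt_atTop (0:ℝ)] with x hx
  rw [Real.rpow_natCast]

lemma tendsto_pow_mul_gauss_atBot {b : ℝ} (hb : 0 < b) (k : ℕ) :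
    Tendsto (fun x : ℝ => x ^ k * Real.exp (-b * x ^ 2)) atBot (nhds 0) := by
  have h := ((tendsto_pow_mul_gauss_atTop hb k).comp tendsto_neg_atBot_atTop).const_mul ((-1:ℝ)^k)
  rw [mul_zero] at h
  refine h.congr fun x => ?_
  show (-1:ℝ)^k * ((-x)^k * Real.exp (-b * (-x) ^ 2)) = _
  rw [neg_sq, ← mul_assoc, ← mul_pow]
  norm_num

lemma integral_deriv_gauss_zero {g g' : ℝ → ℝ}
    (hderiv : ∀ x, HasDerivAt g (g' x) x) (hint : Integrable g')
    (htop : Tendsto g atTop (nhds 0)) (hbot : Tendsto g atBot (nhds 0)) :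
    ∫ x, g' x = 0 := by
  have h1 : ∫ x in Set.Iic (0:ℝ), g' x = g 0 - 0 :=
    integral_Iic_of_hasDerivAt_of_tendsto' (fun x _ => hderiv x) hint.integrableOn hbot
  have h2 : ∫ x in Set.Ioi (0:ℝ), g' x = 0 - g 0 :=
    integral_Ioi_of_hasDerivAt_of_tendsto' (fun x _ => hderiv x) hint.integrableOn htop
  rw [← intervalIntegral.integral_Iic_add_Ioi (b := (0:ℝ)) hint.integrableOn hint.integrableOn, h1, h2]
  ring

lemma hasDerivAt_pow_mul_gauss {b : ℝ} (k : ℕ) (x : ℝ) :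
    HasDerivAt (fun x : ℝ => x ^ (k+1) * Real.exp (-b * x ^ 2))
      ((k+1) * x ^ k * Real.exp (-b * x ^ 2) - 2 * b * (x ^ (k+2) * Real.exp (-b * x ^ 2))) x := by
  have h1 : HasDerivAt (fun x : ℝ => x ^ (k+1)) ((k+1) * x ^ k) x := by
    simpa using hasDerivAt_pow (k+1) x
  have h2 : HasDerivAt (fun x : ℝ => Real.exp (-b * x ^ 2)) (Real.exp (-b * x ^ 2) * (-b * (2 * x))) x := by
    have h3 : HasDerivAt (fun x : ℝ => -b * x ^ 2) (-b * (2 * x)) x := by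
      simpa using (hasDerivAt_pow 2 x).const_mul (-b)
    exact h3.exp
  exact (h1.fun_mul h2).congr_deriv (by ring)

lemma gauss_moment_rec {b : ℝ} (hb : 0 < b) (k : ℕ) :
    ∫ x : ℝ, x ^ (k+2) * Real.exp (-b * x ^ 2)
      = (k+1) / (2*b) * ∫ x : ℝ, x ^ k * Real.exp (-b * x ^ 2) := by
  have hzero : ∫ x : ℝ, ((k+1) * x ^ k * Real.exp (-b * x ^ 2)
      - 2 * b * (x ^ (k+2) * Real.exp (-b * x ^ 2))) = 0 := by
    refine integral_deriv_gauss_zero (g := fun x : ℝ => x ^ (k+1) * Real.exp (-b * x ^ 2))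
      (fun x => hasDerivAt_pow_mul_gauss k x) ?_ (tendsto_pow_mul_gauss_atTop hb (k+1))
      (tendsto_pow_mul_gauss_atBot hb (k+1))
    exact ((((integrable_pow_mul_gauss hb k).const_mul ((k:ℝ)+1))).sub
      ((integrable_pow_mul_gauss hb (k+2)).const_mul (2*b))).congr
      (Filter.Eventually.of_forall fun x => by simp only [Pi.sub_apply]; ring)
  rw [integral_sub (((integrable_pow_mul_gauss hb k).const_mul ((k:ℝ)+1)).congr
        (Filter.Eventually.of_forall fun x => by ring))
      ((integrable_pow_mul_gauss hb (k+2)).const_mul (2*b)),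
    integral_const_mul, sub_eq_zero] at hzero
  have hmul : ∫ x : ℝ, ((k:ℝ)+1) * x ^ k * Real.exp (-b * x ^ 2)
      = ((k:ℝ)+1) * ∫ x : ℝ, x ^ k * Real.exp (-b * x ^ 2) := by
    rw [← integral_const_mul]
    congr 1; funext x; ring
  rw [hmul] at hzero
  have h2b : (2*b) ≠ 0 := by positivity
  field_simp at hzero ⊢
  linarith [hzero]

lemma gauss_m0 {b : ℝ} (hb : 0 < b) :
    ∫ x : ℝ, x ^ 0 * Real.exp (-b * x ^ 2) = Real.sqrt (π / b) := by
  simpa using integral_gaussian b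

lemma gauss_m1 {b : ℝ} (hb : 0 < b) :
    ∫ x : ℝ, x ^ 1 * Real.exp (-b * x ^ 2) = 0 := by
  have hzero : ∫ x : ℝ, (-(2*b)⁻¹ * (Real.exp (-b * x ^ 2) * (-b * (2 * x)))) = 0 := by
    refine integral_deriv_gauss_zero (g := fun x : ℝ => -(2*b)⁻¹ * Real.exp (-b * x ^ 2))
      (fun x => ?_) ?_ ?_ ?_
    · have h3 : HasDerivAt (fun x : ℝ => -b * x ^ 2) (-b * (2 * x)) x := by
        simpa using (hasDerivAt_pow 2 x).const_mul (-b)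
      exact h3.exp.const_mul _
    · refine ((integrable_pow_mul_gauss hb 1).const_mul 1).congr
        (Filter.Eventually.of_forall fun x => by field_simp)
    · simpa using ((tendsto_pow_mul_gauss_atTop hb 0).const_mul (-(2*b)⁻¹)).congr
        (fun x => by ring)
    · simpa using ((tendsto_pow_mul_gauss_atBot hb 0).const_mul (-(2*b)⁻¹)).congr
        (fun x => by ring)
  rw [show (fun x : ℝ => -(2*b)⁻¹ * (Real.exp (-b * x ^ 2) * (-b * (2 * x))))
      = fun x : ℝ => x ^ 1 * Real.exp (-b * x ^ 2) from funext fun x => by field_simp] at hzero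
  exact hzero

lemma gauss_m2 {b : ℝ} (hb : 0 < b) :
    ∫ x : ℝ, x ^ 2 * Real.exp (-b * x ^ 2) = 1/(2*b) * Real.sqrt (π / b) := by
  have := gauss_moment_rec hb 0
  rw [gauss_m0 hb] at this
  simpa using this

lemma gauss_m3 {b : ℝ} (hb : 0 < b) :
    ∫ x : ℝ, x ^ 3 * Real.exp (-b * x ^ 2) = 0 := by
  have := gauss_moment_rec hb 1
  rw [gauss_m1 hb] at this
  simpa using this

lemma gauss_m4 {b : ℝ} (hb : 0 < b) :
    ∫ x : ℝ, x ^ 4 * Real.exp (-b * x ^ 2) = 3/(4*b^2) * Real.sqrt (π / b) := by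
  have := gauss_moment_rec hb 2
  rw [gauss_m2 hb] at this
  rw [this]
  field_simp
  ring

lemma gaussianPDFReal_eq (v : ℝ≥0) (z : ℝ) :
    gaussianPDFReal 0 v z = (Real.sqrt (2 * π * v))⁻¹ * Real.exp (-(2*(v:ℝ))⁻¹ * z ^ 2) := by
  simp only [gaussianPDFReal, sub_zero]
  congr 1
  rw [neg_div, neg_mul]
  congr 1
  ring

lemma integral_gaussianReal_eq {v : ℝ≥0} (hv : v ≠ 0) (x : ℝ) (g : ℝ → ℝ) :
    ∫ y, g y ∂(gaussianReal x v) = ∫ z, g (z + x) * gaussianPDFReal 0 v z := by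
  rw [gaussianReal_of_var_ne_zero x hv]
  have hpdf : gaussianPDF x v = fun y => ((gaussianPDFReal x v y).toNNReal : ℝ≥0∞) := rfl
  rw [hpdf, integral_withDensity_eq_integral_smul
    (by exact (measurable_gaussianPDFReal x v).real_toNNReal) g]
  have h1 : ∀ y, (gaussianPDFReal x v y).toNNReal • g y = gaussianPDFReal x v y * g y := by
    intro y
    rw [NNReal.smul_def, Real.coe_toNNReal _ (gaussianPDFReal_nonneg x v y), smul_eq_mul]
  simp_rw [h1]
  rw [← integral_add_right_eq_self (fun y => gaussianPDFReal x v y * g y) x]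
  congr 1
  funext z
  rw [mul_comm]
  congr 1
  simp [gaussianPDFReal]

lemma integrable_gaussianReal_iff {v : ℝ≥0} (hv : v ≠ 0) (x : ℝ) {g : ℝ → ℝ}
    (hg : Measurable g) :
    Integrable g (gaussianReal x v)
      ↔ Integrable (fun z => g (z + x) * gaussianPDFReal 0 v z) := by
  rw [gaussianReal_of_var_ne_zero x hv]
  rw [integrable_withDensity_iff (measurable_gaussianPDF x v)
    (Filter.Eventually.of_forall fun y => ENNReal.ofReal_lt_top)]
  have h1 : (fun y => g y * (gaussianPDF x v y).toReal)
      = fun y => g y * gaussianPDFReal x v y := by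
    funext y
    rw [gaussianPDF, ENNReal.toReal_ofReal (gaussianPDFReal_nonneg x v y)]
  rw [h1]
  have hmp := measurePreserving_add_right (volume : Measure ℝ) x
  rw [← hmp.integrable_comp (g := fun y => g y * gaussianPDFReal x v y) ((hg.mul (measurable_gaussianPDFReal x v)).aestronglyMeasurable)]
  have h2 : ((fun y => g y * gaussianPDFReal x v y) ∘ (· + x))
      = fun z => g (z + x) * gaussianPDFReal 0 v z := by
    funext z
    simp only [Function.comp]
    congr 1
    simp [gaussianPDFReal]
  rw [h2]

lemma integrable_poly_pdf {v : ℝ≥0} (hv : 0 < (v:ℝ)) (a4 a3 a2 a1 a0 : ℝ) :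
    Integrable (fun z : ℝ =>
      (a4*z^4 + a3*z^3 + a2*z^2 + a1*z + a0) * gaussianPDFReal 0 v z) := by
  have hb : 0 < (2*(v:ℝ))⁻¹ := by positivity
  set b := (2*(v:ℝ))⁻¹ with hbdef
  set C := (Real.sqrt (2 * π * (v:ℝ)))⁻¹ with hC
  have heq : (fun z : ℝ => (a4*z^4 + a3*z^3 + a2*z^2 + a1*z + a0) * gaussianPDFReal 0 v z)
      = fun z : ℝ => (a4*C)*(z^4 * Real.exp (-b*z^2)) + ((a3*C)*(z^3 * Real.exp (-b*z^2))
        + ((a2*C)*(z^2 * Real.exp (-b*z^2)) + ((a1*C)*(z^1 * Real.exp (-b*z^2))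
        + (a0*C)*(z^0 * Real.exp (-b*z^2))))) := by
    funext z
    rw [gaussianPDFReal_eq]
    ring
  rw [heq]
  exact ((integrable_pow_mul_gauss hb 4).const_mul _).add
    (((integrable_pow_mul_gauss hb 3).const_mul _).add
    (((integrable_pow_mul_gauss hb 2).const_mul _).add
    (((integrable_pow_mul_gauss hb 1).const_mul _).add
    ((integrable_pow_mul_gauss hb 0).const_mul _))))

lemma integral_poly_pdf {v : ℝ≥0} (hv : 0 < (v:ℝ)) (a4 a3 a2 a1 a0 : ℝ) :
    ∫ z : ℝ, (a4*z^4 + a3*z^3 + a2*z^2 + a1*z + a0) * gaussianPDFReal 0 v z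
      = 3*a4*(v:ℝ)^2 + a2*(v:ℝ) + a0 := by
  have hb : 0 < (2*(v:ℝ))⁻¹ := by positivity
  set b := (2*(v:ℝ))⁻¹ with hbdef
  set C := (Real.sqrt (2 * π * (v:ℝ)))⁻¹ with hC
  have hCsq : C * Real.sqrt (π / b) = 1 := by
    have h1 : π / b = 2 * π * (v:ℝ) := by
      rw [hbdef, div_eq_mul_inv, inv_inv]
      ring
    rw [h1, hC]
    rw [inv_mul_cancel₀]
    positivity
  have heq : (fun z : ℝ => (a4*z^4 + a3*z^3 + a2*z^2 + a1*z + a0) * gaussianPDFReal 0 v z)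
      = fun z : ℝ => (a4*C)*(z^4 * Real.exp (-b*z^2)) + ((a3*C)*(z^3 * Real.exp (-b*z^2))
        + ((a2*C)*(z^2 * Real.exp (-b*z^2)) + ((a1*C)*(z^1 * Real.exp (-b*z^2))
        + (a0*C)*(z^0 * Real.exp (-b*z^2))))) := by
    funext z
    rw [gaussianPDFReal_eq]
    ring
  rw [heq]
  have i4 : Integrable (fun z : ℝ => (a4*C)*(z^4 * Real.exp (-b*z^2))) :=
    (integrable_pow_mul_gauss hb 4).const_mul _
  have i3 : Integrable (fun z : ℝ => (a3*C)*(z^3 * Real.exp (-b*z^2))) :=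
    (integrable_pow_mul_gauss hb 3).const_mul _
  have i2 : Integrable (fun z : ℝ => (a2*C)*(z^2 * Real.exp (-b*z^2))) :=
    (integrable_pow_mul_gauss hb 2).const_mul _
  have i1 : Integrable (fun z : ℝ => (a1*C)*(z^1 * Real.exp (-b*z^2))) :=
    (integrable_pow_mul_gauss hb 1).const_mul _
  have i0 : Integrable (fun z : ℝ => (a0*C)*(z^0 * Real.exp (-b*z^2))) :=
    (integrable_pow_mul_gauss hb 0).const_mul _
  have i10 : Integrable (fun z : ℝ => (a1*C)*(z^1 * Real.exp (-b*z^2))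
      + (a0*C)*(z^0 * Real.exp (-b*z^2))) := i1.add i0
  have i210 : Integrable (fun z : ℝ => (a2*C)*(z^2 * Real.exp (-b*z^2))
      + ((a1*C)*(z^1 * Real.exp (-b*z^2)) + (a0*C)*(z^0 * Real.exp (-b*z^2)))) := i2.add i10
  have i3210 : Integrable (fun z : ℝ => (a3*C)*(z^3 * Real.exp (-b*z^2))
      + ((a2*C)*(z^2 * Real.exp (-b*z^2)) + ((a1*C)*(z^1 * Real.exp (-b*z^2))
      + (a0*C)*(z^0 * Real.exp (-b*z^2))))) := i3.add i210
  rw [integral_add i4 i3210, integral_add i3 i210, integral_add i2 i10, integral_add i1 i0]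
  rw [integral_const_mul, integral_const_mul, integral_const_mul, integral_const_mul,
    integral_const_mul, gauss_m0 hb, gauss_m1 hb, gauss_m2 hb, gauss_m3 hb, gauss_m4 hb]
  have hv2 : 1/(2*b) = (v:ℝ) := by
    rw [hbdef]
    field_simp
  have hv4 : 3/(4*b^2) = 3*(v:ℝ)^2 := by
    rw [hbdef]
    field_simp
    ring
  rw [hv2, hv4]
  linear_combination (3*a4*(v:ℝ)^2 + a2*(v:ℝ) + a0) * hCsq

lemma variance_quadratic {v : ℝ≥0} (hv : 0 < v) (x α γ c : ℝ) :
    variance (fun y => α*y^2 + γ*y + c) (gaussianReal x v)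
      = 2*α^2*(v:ℝ)^2 + (2*α*x+γ)^2*(v:ℝ) := by
  have hv' : (0:ℝ) < (v:ℝ) := by exact_mod_cast hv
  have hvne : v ≠ 0 := hv.ne'
  set γ' : ℝ := 2*α*x + γ with hγ'
  set c' : ℝ := α*x^2 + γ*x + c with hc'
  have hfm : Measurable (fun y : ℝ => α*y^2 + γ*y + c) := by fun_prop
  have hfm2 : Measurable (fun y : ℝ => (α*y^2 + γ*y + c)^2) := by fun_prop
  have hint_sq : Integrable (fun y : ℝ => (α*y^2 + γ*y + c)^2) (gaussianReal x v) := by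
    rw [integrable_gaussianReal_iff hvne x hfm2]
    refine (integrable_poly_pdf hv' (α^2) (2*α*γ') (γ'^2 + 2*α*c') (2*γ'*c') (c'^2)).congr
      (Filter.Eventually.of_forall fun z => ?_)
    simp only [hγ', hc']
    ring
  have hmem : MemLp (fun y : ℝ => α*y^2 + γ*y + c) 2 (gaussianReal x v) :=
    (memLp_two_iff_integrable_sq hfm.aestronglyMeasurable).2 hint_sq
  rw [variance_eq_sub hmem]
  have hE1 : ∫ y, (α*y^2 + γ*y + c) ∂(gaussianReal x v) = α*(v:ℝ) + c' := by
    rw [integral_gaussianReal_eq hvne x]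
    rw [show (fun z : ℝ => (α*(z+x)^2 + γ*(z+x) + c) * gaussianPDFReal 0 v z)
        = fun z : ℝ => (0*z^4 + 0*z^3 + α*z^2 + γ'*z + c') * gaussianPDFReal 0 v z from
      funext fun z => by simp only [hγ', hc']; ring]
    rw [integral_poly_pdf hv']
    ring
  have hE2 : ∫ y, ((α*y^2 + γ*y + c)^2) ∂(gaussianReal x v)
      = 3*α^2*(v:ℝ)^2 + (γ'^2 + 2*α*c')*(v:ℝ) + c'^2 := by
    rw [integral_gaussianReal_eq hvne x]
    rw [show (fun z : ℝ => (α*(z+x)^2 + γ*(z+x) + c)^2 * gaussianPDFReal 0 v z)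
        = fun z : ℝ => (α^2*z^4 + (2*α*γ')*z^3 + (γ'^2 + 2*α*c')*z^2 + (2*γ'*c')*z + c'^2)
            * gaussianPDFReal 0 v z from
      funext fun z => by simp only [hγ', hc']; ring]
    rw [integral_poly_pdf hv']
  have hpow : ((fun y : ℝ => α*y^2 + γ*y + c) ^ 2) = fun y : ℝ => (α*y^2 + γ*y + c)^2 := by
    funext y
    simp [pow_two]
  rw [hpow]
  simp only [hE1, hE2]
  ring

lemma log_gaussianPDFReal {v : ℝ≥0} (hv : 0 < (v:ℝ)) (μ y : ℝ) :
    Real.log (gaussianPDFReal μ v y)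
      = Real.log ((Real.sqrt (2*π*(v:ℝ)))⁻¹) - (y-μ)^2/(2*(v:ℝ)) := by
  rw [gaussianPDFReal]
  rw [Real.log_mul (by positivity) (Real.exp_ne_zero _), Real.log_exp]
  ring

/-- With `X ~ P* = N(0, Γ)` and
`ν_x = Var(log (W(Y|x)/Q*(Y)))` for `Y ~ N(x, N)` and `Q* = N(0, Γ + N)`,
the channel dispersion `V(Γ) = E_{P*}[ν_X]` equals `(Γ² + 2 Γ N)/(2 (N + Γ)²)`. -/
theorem awgn_dispersion (N Γ : ℝ≥0) (hN : 0 < N) (hΓ : 0 < Γ) :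
    ∫ x, variance
        (fun y => Real.log (gaussianPDFReal x N y / gaussianPDFReal 0 (Γ + N) y))
        (gaussianReal x N) ∂(gaussianReal 0 Γ)
      = ((Γ : ℝ) ^ 2 + 2 * (Γ : ℝ) * N) / (2 * ((N : ℝ) + Γ) ^ 2) := by
  have hN' : (0:ℝ) < (N:ℝ) := by exact_mod_cast hN
  have hΓ' : (0:ℝ) < (Γ:ℝ) := by exact_mod_cast hΓ
  have hΓN : (0:ℝ) < ((Γ:ℝ)+(N:ℝ)) := by linarith
  have hΓNne : Γ + N ≠ 0 := by positivity
  set A : ℝ := 1/(2*((Γ:ℝ)+(N:ℝ))) - 1/(2*(N:ℝ)) with hA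
  set L : ℝ := Real.log ((Real.sqrt (2*π*(N:ℝ)))⁻¹)
    - Real.log ((Real.sqrt (2*π*((Γ:ℝ)+(N:ℝ))))⁻¹) with hL
  have hvar : ∀ x : ℝ,
      variance (fun y => Real.log (gaussianPDFReal x N y / gaussianPDFReal 0 (Γ + N) y))
        (gaussianReal x N)
      = 2*A^2*(N:ℝ)^2 + (2*A*x + x/(N:ℝ))^2*(N:ℝ) := by
    intro x
    have hfun : (fun y : ℝ => Real.log (gaussianPDFReal x N y / gaussianPDFReal 0 (Γ + N) y))
        = fun y : ℝ => A*y^2 + (x/(N:ℝ))*y + (L - x^2/(2*(N:ℝ))) := by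
      funext y
      rw [Real.log_div (gaussianPDFReal_pos x N y hN.ne').ne'
        (gaussianPDFReal_pos 0 (Γ+N) y hΓNne).ne']
      rw [log_gaussianPDFReal hN' x y,
        log_gaussianPDFReal (v := Γ + N) (by push_cast; linarith) 0 y]
      push_cast
      simp only [hA, hL]
      field_simp
      ring
    rw [hfun, variance_quadratic hN x A (x/(N:ℝ)) (L - x^2/(2*(N:ℝ)))]
  rw [show (fun x : ℝ =>
      variance (fun y => Real.log (gaussianPDFReal x N y / gaussianPDFReal 0 (Γ + N) y))
        (gaussianReal x N))
    = fun x : ℝ => 2*A^2*(N:ℝ)^2 + (2*A*x + x/(N:ℝ))^2*(N:ℝ) from funext hvar]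
  rw [integral_gaussianReal_eq hΓ.ne' 0]
  rw [show (fun z : ℝ => (2*A^2*(N:ℝ)^2 + (2*A*(z+0) + (z+0)/(N:ℝ))^2*(N:ℝ))
        * gaussianPDFReal 0 Γ z)
      = fun z : ℝ => (0*z^4 + 0*z^3 + ((2*A + 1/(N:ℝ))^2*(N:ℝ))*z^2 + 0*z + 2*A^2*(N:ℝ)^2)
        * gaussianPDFReal 0 Γ z from funext fun z => by ring]
  rw [integral_poly_pdf hΓ']
  simp only [hA]
  field_simp
  ring
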